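/- For all vectors y, z ∈ ℝ^d and any real r ≥ 1, one has ⟨|y|^{r-1} y − |z|^{r-1} z, y − z⟩ ≥ (1/2) |y|^{r-1} |y − z|^2 + (1/2) |z|^{r-1} |y − z|^2. -/

import Mathlib

/-!
Polarization gives the identity
`⟪a y - b z, y - z⟫ = (a + b)/2 ‖y - z‖² + (a - b)/2 (‖y‖² - ‖z‖²)`,
and the last term is nonnegative for `a = φ ‖y‖`, `b = φ ‖z‖` whenever `φ` is monotone on `[0, ∞)`,
because `φ` and `t ↦ t²` then vary together there.
-/

open Set RealInnerProductSpace

variable {E : Type*} [NormedAddCommGroup E] [InnerProductSpace ℝ E]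

theorem inner_smul_sub_smul_sub_eq (a b : ℝ) (y z : E) :
    ⟪a • y - b • z, y - z⟫ = (a + b) / 2 * ‖y - z‖ ^ 2 + (a - b) / 2 * (‖y‖ ^ 2 - ‖z‖ ^ 2) := by
  rw [norm_sub_sq_real, inner_sub_left, inner_sub_right, inner_sub_right, real_inner_smul_left,
    real_inner_smul_left, real_inner_smul_left, real_inner_smul_left, real_inner_self_eq_norm_sq,
    real_inner_self_eq_norm_sq, real_inner_comm z y]
  ring

theorem half_mul_norm_sub_sq_le_inner_of_monotoneOn {φ : ℝ → ℝ} (hφ : MonotoneOn φ (Ici 0))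
    (y z : E) :
    1 / 2 * φ ‖y‖ * ‖y - z‖ ^ 2 + 1 / 2 * φ ‖z‖ * ‖y - z‖ ^ 2 ≤ ⟪φ ‖y‖ • y - φ ‖z‖ • z, y - z⟫ := by
  have hvary : MonovaryOn φ (· ^ 2) (Ici 0) := hφ.monovaryOn fun _ _ _ _ hab ↦ by gcongr
  have hcross : 0 ≤ (φ ‖y‖ - φ ‖z‖) * (‖y‖ ^ 2 - ‖z‖ ^ 2) :=
    hvary.sub_mul_sub_nonneg (norm_nonneg z) (norm_nonneg y)
  rw [inner_smul_sub_smul_sub_eq]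
  linarith

theorem stmt_2 (d : ℕ) (r : ℝ) (hr : 1 ≤ r) (y z : EuclideanSpace ℝ (Fin d)) :
    (1 / 2) * ‖y‖ ^ (r - 1) * ‖y - z‖ ^ 2 + (1 / 2) * ‖z‖ ^ (r - 1) * ‖y - z‖ ^ 2 ≤
      (inner ℝ ((‖y‖ ^ (r - 1)) • y - (‖z‖ ^ (r - 1)) • z) (y - z) : ℝ) :=
  half_mul_norm_sub_sq_le_inner_of_monotoneOn
    (Real.monotoneOn_rpow_Ici_of_exponent_nonneg (sub_nonneg.mpr hr)) y z
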